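/- Let p be a prime, R a commutative ring of characteristic p, and σ a finite index type. Then for every n : σ →₀ ℕ and every f ∈ MvPolynomial σ R, the divided-power operators satisfy D_{p•n}(f^p) = (D_n f)^p, where p•n denotes the componentwise multiple of n by p. -/

import Mathlib

/-!
Both sides are additive in `f`, since `f ↦ f ^ p` is the Frobenius endomorphism, so it suffices
to treat a monomial `a X^m`. There the two sides are `C(pm, pn) a^p X^(p(m-n))` and
`C(m, n)^p a^p X^(p(m-n))` (products of binomials over `σ`), which agree in characteristic `p`
by Lucas's theorem `C(pm, pn) ≡ C(m, n) [MOD p]` and Fermat's little theorem.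
-/

/-- The divided-power operator `D_n` on `MvPolynomial σ R`, determined on monomials by
`D_n (X ^ m) = (∏ i, Nat.choose (m i) (n i)) • X ^ (m - n)` (componentwise truncated
subtraction). -/
noncomputable def dpOp (R : Type*) [CommRing R] (σ : Type*) [Fintype σ] (n : σ →₀ ℕ) :
    MvPolynomial σ R →ₗ[R] MvPolynomial σ R :=
  Finsupp.lsum ℕ (fun m : σ →₀ ℕ =>
    (∏ i, Nat.choose (m i) (n i)) • (MvPolynomial.monomial (m - n) : R →ₗ[R] MvPolynomial σ R))
    ∘ₗ (AddMonoidAlgebra.coeffLinearEquiv R).toLinearMap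

open MvPolynomial

theorem Nat.choose_prime_mul_modEq {p : ℕ} [Fact p.Prime] (m n : ℕ) :
    (p * m).choose (p * n) ≡ m.choose n [MOD p] := by
  simpa [Nat.mul_div_cancel_left _ (Fact.out : p.Prime).pos] using
    Choose.choose_modEq_choose_mod_mul_choose_div_nat (n := p * m) (k := p * n) (p := p)

theorem CharP.natCast_choose_prime_mul {R : Type*} [CommRing R] {p : ℕ} [Fact p.Prime]
    [CharP R p] (m n : ℕ) : ((p * m).choose (p * n) : R) = (m.choose n : R) ^ p := by
  rw [← frobenius_def, map_natCast]
  exact CharP.natCast_eq_natCast' R p (Nat.choose_prime_mul_modEq m n)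

section
variable {R : Type*} [CommRing R] {σ : Type*} [Fintype σ]

theorem dpOp_monomial (n m : σ →₀ ℕ) (a : R) :
    dpOp R σ n (monomial m a) = monomial (m - n) ((∏ i, (m i).choose (n i)) • a) := by
  rw [map_nsmul]
  exact Finsupp.lsum_single ℕ _ m a

theorem dpOp_smul_monomial_pow {p : ℕ} [Fact p.Prime] [CharP R p] (n m : σ →₀ ℕ) (a : R) :
    dpOp R σ (p • n) (monomial m a ^ p) = dpOp R σ n (monomial m a) ^ p := by
  have hsub : p • m - p • n = p • (m - n) := by
    ext i
    simp [Nat.mul_sub]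
  simp only [monomial_pow, dpOp_monomial, nsmul_eq_mul, mul_pow, Nat.cast_prod, ← Finset.prod_pow,
    hsub]
  congr 2
  exact Finset.prod_congr rfl fun i _ => CharP.natCast_choose_prime_mul (m i) (n i)
end

/-- In characteristic `p`, the divided-power operators satisfy `D_(p•n) (f^p) = (D_n f)^p`. -/
theorem dpOp_p_smul_pow (p : ℕ) (hp : p.Prime) (R : Type*) [CommRing R] [CharP R p]
    (σ : Type*) [Fintype σ] (n : σ →₀ ℕ) (f : MvPolynomial σ R) :
    dpOp R σ (p • n) (f ^ p) = (dpOp R σ n f) ^ p := by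
  have : Fact p.Prime := ⟨hp⟩
  induction f using MvPolynomial.induction_on' with
  | monomial m a => exact dpOp_smul_monomial_pow n m a
  | add f g hf hg => rw [add_pow_char, map_add, hf, hg, map_add, add_pow_char]
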